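/- For all complex numbers z with |z| ≤ 1, Σ_{m=0}^{∞} e_{O,m} z^m = Π_p (1 + (z−1)/(p²(p+1))), the product running over all primes p. -/

import Mathlib

open scoped BigOperators

/-- A positive integer is *powerful* if every prime dividing it divides it with
multiplicity at least `2`. -/
def Powerful (f : ℕ) : Prop := 0 < f ∧ ∀ p : ℕ, p.Prime → p ∣ f → p ^ 2 ∣ f

/-- `ω_O(n)`: the number of primes dividing `n` with odd multiplicity exceeding `1`. -/
def omegaO (n : ℕ) : ℕ :=
  (n.primeFactors.filter fun p => Odd (n.factorization p) ∧ 1 < n.factorization p).card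

/-- The density `e_{O,m}` of integers `n` with `ω_O(n) = m`. -/
noncomputable def eOm (m : ℕ) : ℝ :=
  6 / Real.pi ^ 2 *
    ∑' f : {f : ℕ // Powerful f ∧ omegaO f = m},
      ((f : ℕ) : ℝ)⁻¹ * ∏ p ∈ (f : ℕ).primeFactors, (1 + 1 / (p : ℝ))⁻¹

/-!
On powerful numbers put the weight `w(n) = n⁻¹ ∏_{p ∣ n} (1 + 1/p)⁻¹`. For `‖z‖ ≤ 1` the function
`w(n) z^{ω_O(n)}` is multiplicative and absolutely summable (every powerful number is `a² b³`), and
grouping its terms by `ω_O` shows that `ζ(2)⁻¹` times its sum is `∑ₘ e_{O,m} zᵐ`. Its Euler factor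
at `p` is `1 + ∑_{e ≥ 2} w(pᵉ) z^{[e odd]}`, a pair of geometric series summing to
`(1 - p⁻²)⁻¹ (1 + (z - 1)/(p²(p + 1)))`; the factor `(1 - p⁻²)⁻¹` cancels against the Euler product
of `ζ(2)⁻¹`.
-/

theorem powerful_one : Powerful 1 :=
  ⟨one_pos, fun _ hp hd => absurd (Nat.dvd_one.mp hd) hp.ne_one⟩

theorem not_powerful_zero : ¬ Powerful 0 := fun h => h.1.false

theorem Nat.Prime.not_powerful {p : ℕ} (hp : p.Prime) : ¬ Powerful p := fun h =>
  (lt_self_pow₀ hp.one_lt one_lt_two).not_ge (Nat.le_of_dvd hp.pos (h.2 p hp dvd_rfl))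

theorem powerful_prime_pow {p e : ℕ} (hp : p.Prime) (he : 2 ≤ e) : Powerful (p ^ e) := by
  refine ⟨Nat.pow_pos hp.pos, fun q hq hqd => ?_⟩
  rw [(Nat.prime_dvd_prime_iff_eq hq hp).mp (hq.dvd_of_dvd_pow hqd)]
  exact pow_dvd_pow p he

theorem powerful_mul_iff_of_coprime {m n : ℕ} (h : m.Coprime n) :
    Powerful (m * n) ↔ Powerful m ∧ Powerful n := by
  refine ⟨fun ⟨hpos, hdvd⟩ => ⟨⟨Nat.pos_of_mul_pos_right hpos, fun p hp hpm => ?_⟩,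
    ⟨Nat.pos_of_mul_pos_left hpos, fun p hp hpn => ?_⟩⟩, fun ⟨⟨hm, hdm⟩, ⟨hn, hdn⟩⟩ =>
    ⟨Nat.mul_pos hm hn, fun p hp hd => ?_⟩⟩
  · exact ((Nat.Coprime.coprime_dvd_left hpm h).pow_left 2).dvd_of_dvd_mul_right
      (hdvd p hp (hpm.mul_right n))
  · exact ((Nat.Coprime.coprime_dvd_left hpn h.symm).pow_left 2).dvd_of_dvd_mul_left
      (hdvd p hp (hpn.mul_left m))
  · rcases hp.dvd_mul.mp hd with hpm | hpn
    · exact (hdm p hp hpm).mul_right n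
    · exact (hdn p hp hpn).mul_left m

theorem Powerful.exists_eq_sq_mul_cube {n : ℕ} (hn : Powerful n) :
    ∃ a b : ℕ, a ^ 2 * b ^ 3 = n := by
  obtain ⟨a, b, -, hb, rfl, ha⟩ := Nat.sq_mul_squarefree_of_pos hn.1
  have hab : a ∣ b := by
    rw [← Nat.prod_primeFactors_of_squarefree ha, Nat.prod_primeFactors_dvd_iff hb.ne']
    intro p hp
    have hpp := Nat.prime_of_mem_primeFactors hp
    refine Nat.mem_primeFactors.mpr ⟨hpp, by_contra fun hpb => ?_, hb.ne'⟩
    have hsq : p ^ 2 ∣ a :=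
      (Nat.Coprime.pow 2 2 (hpp.coprime_iff_not_dvd.mpr hpb)).dvd_of_dvd_mul_left
        (hn.2 p hpp ((Nat.dvd_of_mem_primeFactors hp).mul_left _))
    exact Nat.squarefree_iff_prime_squarefree.mp ha p hpp (by rwa [← pow_two])
  obtain ⟨c, rfl⟩ := hab
  exact ⟨c, a, by ring⟩

theorem summable_inv_powerful : Summable (fun n : {n : ℕ // Powerful n} => ((n : ℕ) : ℝ)⁻¹) := by
  choose a b hab using fun n : {n : ℕ // Powerful n} => n.2.exists_eq_sq_mul_cube
  have hinj : Function.Injective fun n => (a n, b n) := fun n m h => by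
    simp only [Prod.mk.injEq] at h
    exact Subtype.ext (by rw [← hab n, ← hab m, h.1, h.2])
  have hsum : Summable fun x : ℕ × ℕ => ((x.1 : ℝ) ^ 2)⁻¹ * ((x.2 : ℝ) ^ 3)⁻¹ :=
    (Real.summable_nat_pow_inv.mpr one_lt_two).mul_of_nonneg
      (Real.summable_nat_pow_inv.mpr (by norm_num)) (fun _ => by positivity)
      (fun _ => by positivity)
  refine (hsum.comp_injective hinj).congr fun n => ?_
  simp only [Function.comp_apply, ← hab n]
  push_cast
  rw [mul_inv]

theorem Nat.Coprime.factorization_mul_apply_of_mem_primeFactors {m n p : ℕ} (h : m.Coprime n)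
    (hp : p ∈ m.primeFactors) : (m * n).factorization p = m.factorization p := by
  have hpn : p ∉ n.factorization.support := by
    rw [Nat.support_factorization]
    exact Finset.disjoint_left.mp h.disjoint_primeFactors hp
  rw [Nat.factorization_mul_apply_of_coprime h, Finsupp.notMem_support_iff.mp hpn, add_zero]

theorem omegaO_mul_of_coprime {m n : ℕ} (h : m.Coprime n) :
    omegaO (m * n) = omegaO m + omegaO n := by
  unfold omegaO
  rw [h.primeFactors_mul, Finset.filter_union, Finset.card_union_of_disjoint
    (h.disjoint_primeFactors.mono (Finset.filter_subset _ _) (Finset.filter_subset _ _))]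
  congr 2 <;> refine Finset.filter_congr fun p hp => ?_
  · rw [h.factorization_mul_apply_of_mem_primeFactors hp]
  · rw [mul_comm, h.symm.factorization_mul_apply_of_mem_primeFactors hp]

theorem omegaO_prime_pow {p : ℕ} (hp : p.Prime) (e : ℕ) :
    omegaO (p ^ e) = if Odd e ∧ 1 < e then 1 else 0 := by
  rcases Nat.eq_zero_or_pos e with rfl | he
  · simp [omegaO]
  · simp only [omegaO, Nat.primeFactors_prime_pow he.ne' hp, hp.factorization_pow,
      Finsupp.single_eq_same, Finset.filter_singleton]
    split_ifs <;> rfl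

noncomputable def powerfulWeight : ℕ → ℝ :=
  {n | Powerful n}.indicator fun n => (n : ℝ)⁻¹ * ∏ p ∈ n.primeFactors, (1 + 1 / (p : ℝ))⁻¹

theorem powerfulWeight_of_powerful {n : ℕ} (hn : Powerful n) :
    powerfulWeight n = (n : ℝ)⁻¹ * ∏ p ∈ n.primeFactors, (1 + 1 / (p : ℝ))⁻¹ :=
  Set.indicator_of_mem (s := {n | Powerful n}) hn _

theorem powerfulWeight_of_not_powerful {n : ℕ} (hn : ¬ Powerful n) : powerfulWeight n = 0 :=
  Set.indicator_of_notMem (s := {n | Powerful n}) hn _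

theorem powerfulWeight_nonneg (n : ℕ) : 0 ≤ powerfulWeight n :=
  Set.indicator_nonneg (fun _ _ => by positivity) n

theorem powerfulWeight_le (n : ℕ) :
    powerfulWeight n ≤ {n | Powerful n}.indicator (fun n => (n : ℝ)⁻¹) n := by
  refine Set.indicator_le_indicator (mul_le_of_le_one_right (by positivity)
    (Finset.prod_le_one (fun _ _ => by positivity) fun p _ => ?_))
  exact inv_le_one_of_one_le₀ (le_add_of_nonneg_right (by positivity))

theorem summable_powerfulWeight : Summable powerfulWeight :=
  (summable_subtype_iff_indicator.mp summable_inv_powerful).of_nonneg_of_le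
    powerfulWeight_nonneg powerfulWeight_le

theorem powerfulWeight_mul_of_coprime {m n : ℕ} (h : m.Coprime n) :
    powerfulWeight (m * n) = powerfulWeight m * powerfulWeight n := by
  by_cases hmn : Powerful m ∧ Powerful n
  · obtain ⟨hm, hn⟩ := hmn
    rw [powerfulWeight_of_powerful ((powerful_mul_iff_of_coprime h).mpr ⟨hm, hn⟩),
      powerfulWeight_of_powerful hm, powerfulWeight_of_powerful hn, h.primeFactors_mul,
      Finset.prod_union h.disjoint_primeFactors, Nat.cast_mul, mul_inv]
    ring
  · rw [powerfulWeight_of_not_powerful (mt (powerful_mul_iff_of_coprime h).mp hmn)]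
    rcases not_and_or.mp hmn with hm | hn
    · rw [powerfulWeight_of_not_powerful hm, zero_mul]
    · rw [powerfulWeight_of_not_powerful hn, mul_zero]

theorem powerfulWeight_one : powerfulWeight 1 = 1 := by
  simp [powerfulWeight_of_powerful powerful_one]

theorem powerfulWeight_prime_pow_add_two {p : ℕ} (hp : p.Prime) (e : ℕ) :
    powerfulWeight (p ^ (e + 2)) = (1 + 1 / (p : ℝ))⁻¹ * ((p : ℝ)⁻¹) ^ (e + 2) := by
  rw [powerfulWeight_of_powerful (powerful_prime_pow hp (by omega)),
    Nat.primeFactors_prime_pow (by omega) hp, Finset.prod_singleton, Nat.cast_pow, inv_pow,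
    mul_comm]

noncomputable def genTerm (z : ℂ) (n : ℕ) : ℂ := powerfulWeight n * z ^ omegaO n

theorem genTerm_mul_of_coprime (z : ℂ) {m n : ℕ} (h : m.Coprime n) :
    genTerm z (m * n) = genTerm z m * genTerm z n := by
  simp only [genTerm, powerfulWeight_mul_of_coprime h, omegaO_mul_of_coprime h, pow_add,
    Complex.ofReal_mul]
  ring

theorem genTerm_zero (z : ℂ) : genTerm z 0 = 0 := by
  simp [genTerm, powerfulWeight_of_not_powerful not_powerful_zero]

theorem genTerm_one (z : ℂ) : genTerm z 1 = 1 := by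
  simp [genTerm, powerfulWeight_one, omegaO]

theorem norm_genTerm_le {z : ℂ} (hz : ‖z‖ ≤ 1) (n : ℕ) : ‖genTerm z n‖ ≤ powerfulWeight n := by
  rw [genTerm, norm_mul, Complex.norm_real, Real.norm_of_nonneg (powerfulWeight_nonneg n), norm_pow]
  exact mul_le_of_le_one_right (powerfulWeight_nonneg n) (pow_le_one₀ (norm_nonneg z) hz)

theorem genTerm_prime_pow_add_two {p : ℕ} (hp : p.Prime) (z : ℂ) (e : ℕ) :
    genTerm z (p ^ (e + 2)) =
      (1 + 1 / (p : ℂ))⁻¹ * ((p : ℂ)⁻¹) ^ (e + 2) * if Odd e then z else 1 := by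
  have hodd : Odd (e + 2) ∧ 1 < e + 2 ↔ Odd e := by simp [Nat.odd_add]
  rw [genTerm, powerfulWeight_prime_pow_add_two hp, omegaO_prime_pow hp]
  simp only [hodd]
  split_ifs <;> simp

theorem hasSum_genTerm_prime_pow {p : ℕ} (hp : p.Prime) (z : ℂ) :
    HasSum (fun e => genTerm z (p ^ e))
      ((1 - ((p : ℂ) ^ 2)⁻¹)⁻¹ * (1 + (z - 1) / ((p : ℂ) ^ 2 * ((p : ℂ) + 1)))) := by
  set c : ℂ := (1 + 1 / (p : ℂ))⁻¹
  set q : ℂ := (p : ℂ)⁻¹ with hq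
  have hgeo : HasSum (fun k => (q ^ 2) ^ k) (1 - q ^ 2)⁻¹ := by
    refine hasSum_geometric_of_norm_lt_one ?_
    rw [norm_pow, hq, norm_inv, Complex.norm_natCast]
    exact pow_lt_one₀ (by positivity) (inv_lt_one_of_one_lt₀ (by exact_mod_cast hp.one_lt))
      two_ne_zero
  have heven : HasSum (fun k => genTerm z (p ^ (2 * k + 2))) (c * q ^ 2 * (1 - q ^ 2)⁻¹) := by
    refine (hgeo.mul_left (c * q ^ 2)).congr_fun fun k => ?_
    rw [genTerm_prime_pow_add_two hp, if_neg (Nat.not_odd_iff_even.mpr (even_two_mul k))]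
    ring
  have hodd : HasSum (fun k => genTerm z (p ^ (2 * k + 1 + 2))) (c * z * q ^ 3 * (1 - q ^ 2)⁻¹) := by
    refine (hgeo.mul_left (c * z * q ^ 3)).congr_fun fun k => ?_
    rw [genTerm_prime_pow_add_two hp, if_pos (odd_two_mul_add_one k)]
    ring
  have htail := (hasSum_nat_add_iff (f := fun e => genTerm z (p ^ e)) 2).mp
    (HasSum.even_add_odd (f := fun e => genTerm z (p ^ (e + 2))) heven hodd)
  rw [Finset.sum_range_succ, Finset.sum_range_one, pow_zero, pow_one, genTerm_one, genTerm,
    powerfulWeight_of_not_powerful hp.not_powerful, Complex.ofReal_zero, zero_mul,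
    add_zero] at htail
  have hp0 : (p : ℂ) ≠ 0 := Nat.cast_ne_zero.mpr hp.ne_zero
  have hpsq : (p : ℂ) ^ 2 - 1 ≠ 0 := by
    rw [sub_ne_zero]; exact_mod_cast (Nat.one_lt_pow two_ne_zero hp.one_lt).ne'
  have hvalue : c * q ^ 2 * (1 - q ^ 2)⁻¹ + c * z * q ^ 3 * (1 - q ^ 2)⁻¹ + 1 =
      (1 - ((p : ℂ) ^ 2)⁻¹)⁻¹ * (1 + (z - 1) / ((p : ℂ) ^ 2 * ((p : ℂ) + 1))) := by
    simp only [c, q]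
    field_simp
    ring
  exact hvalue ▸ htail

theorem tsum_genTerm_preimage_omegaO (z : ℂ) (m : ℕ) :
    ∑' n : omegaO ⁻¹' {m}, genTerm z n =
      (∑' n : omegaO ⁻¹' {m}, powerfulWeight n : ℝ) * z ^ m := by
  rw [Complex.ofReal_tsum, ← tsum_mul_right]
  exact tsum_congr fun n => by rw [genTerm, show omegaO n = m from n.2]

theorem eOm_eq_tsum_preimage_omegaO (m : ℕ) :
    eOm m = 6 / Real.pi ^ 2 * ∑' n : omegaO ⁻¹' {m}, powerfulWeight n := by
  rw [eOm, tsum_subtype (omegaO ⁻¹' {m}), powerfulWeight, Set.indicator_indicator,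
    ← tsum_subtype, Set.inter_comm]
  rfl

theorem hasProd_one_sub_inv_sq_primes :
    HasProd (fun p : Nat.Primes => 1 - ((p : ℂ) ^ 2)⁻¹) (riemannZeta 2)⁻¹ := by
  have hζ : riemannZeta 2 ≠ 0 := riemannZeta_ne_zero_of_one_lt_re (by norm_num)
  refine ((riemannZeta_eulerProduct_hasProd (s := 2) (by norm_num)).inv₀ hζ).congr_fun fun p => ?_
  rw [inv_inv, Complex.cpow_neg, Complex.cpow_ofNat]

theorem eOm_generating_function (z : ℂ) (hz : ‖z‖ ≤ 1) :
    ∃ P : ℂ,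
      HasProd (fun p : Nat.Primes =>
        1 + (z - 1) / (((p : ℕ) : ℂ) ^ 2 * (((p : ℕ) : ℂ) + 1))) P ∧
      HasSum (fun m : ℕ => (eOm m : ℂ) * z ^ m) P := by
  have hsum : Summable (‖genTerm z ·‖) :=
    summable_powerfulWeight.of_nonneg_of_le (fun _ => norm_nonneg _) (norm_genTerm_le hz)
  refine ⟨(riemannZeta 2)⁻¹ * ∑' n, genTerm z n, ?_, ?_⟩
  · have hEuler := EulerProduct.eulerProduct_hasProd (genTerm_one z)
      (genTerm_mul_of_coprime z) hsum (genTerm_zero z)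
    refine (hasProd_one_sub_inv_sq_primes.mul hEuler).congr_fun fun p => ?_
    have hfactor : (1 : ℂ) - ((p : ℂ) ^ 2)⁻¹ ≠ 0 := sub_ne_zero.mpr (Ne.symm (inv_ne_one.mpr
      (by exact_mod_cast (Nat.one_lt_pow two_ne_zero p.2.one_lt).ne')))
    rw [(hasSum_genTerm_prime_pow p.2 z).tsum_eq, mul_inv_cancel_left₀ hfactor]
  · refine ((hsum.of_norm.hasSum.tsum_fiberwise omegaO).mul_left _).congr_fun fun m => ?_
    rw [tsum_genTerm_preimage_omegaO, eOm_eq_tsum_preimage_omegaO, riemannZeta_two]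
    push_cast
    ring
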